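/- arXiv:1107.4067 — 2 statements merged into one kernel-verified Lean document; each statement's English description precedes it below -/
import Mathlib

section
/- For every finite connected simple graph G = (V, E) and every nonempty set V₁ ⊆ V, there exists a partition 𝒱 of V such that V₁ is one of the blocks of 𝒱, every other block of 𝒱 is contained in a single distance layer L_k = {v ∈ V : dist(v, V₁) = k} for some k ≥ 1, and the quotient graph of G by 𝒱 is a tree (i.e., 𝒱 is a block-tree of G with root cluster V₁). -/
/-- The distance from a vertex `v` to a set of vertices `S`:
the minimum over `u ∈ S` of the graph distance between `u` and `v`. -/
noncomputable def distToSet {V : Type*} (G : SimpleGraph V) (S : Set V) (v : V) : ℕ :=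
  sInf {d : ℕ | ∃ u ∈ S, G.dist u v = d}

/-- The quotient graph of `G` by a partition `P` of its vertex set: the vertices are the
blocks of `P`, and distinct blocks `A`, `B` are adjacent iff some `u ∈ A` and `v ∈ B`
are adjacent in `G`. -/
def quotGraphPart {V : Type*} (G : SimpleGraph V) (P : Set (Set V)) : SimpleGraph P where
  Adj A B := A ≠ B ∧ ∃ u ∈ (A : Set V), ∃ v ∈ (B : Set V), G.Adj u v
  symm := by
    refine ⟨?_⟩
    rintro A B ⟨hne, u, hu, v, hv, huv⟩
    exact ⟨hne.symm, v, hv, u, hu, huv.symm⟩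
  loopless := by refine ⟨?_⟩; rintro A ⟨hne, -⟩; exact hne rfl

/-!
Take for `𝒱` the nonempty distance layers `{v | dist(v, V₁) = k}`; the layer `k = 0` is `V₁`.
Any quotient of a connected graph is connected. Adjacent vertices lie in equal or consecutive
layers, so the layer index is an injective homomorphism from the quotient graph into the Hasse
diagram of `ℕ`, which is a path; hence the quotient graph is acyclic.
-/

open SimpleGraph

theorem SimpleGraph.Reachable.mem_of_forall_adj_mem {V : Type*} {G : SimpleGraph V} {s : Set V}
    (hs : ∀ ⦃x y⦄, G.Adj x y → x ∈ s → y ∈ s) {u v : V} (huv : G.Reachable u v) (hu : u ∈ s) :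
    v ∈ s := by
  obtain ⟨p⟩ := huv
  induction p with
  | nil => exact hu
  | cons h _ ih => exact ih (hs h hu)

theorem SimpleGraph.hasse_isAcyclic (α : Type*) [LinearOrder α] : (hasse α).IsAcyclic := by
  have hbridge : ∀ a b : α, a ⋖ b → (hasse α).IsBridge s(a, b) := by
    intro a b hab hreach
    -- without the edge `s(a, b)`, no edge leaves the down-set of `a`
    have hclosed : ∀ ⦃x y⦄, ((hasse α).deleteEdges {s(a, b)}).Adj x y → x ≤ a → y ≤ a := by
      intro x y hxy hxa
      rw [deleteEdges_adj, hasse_adj, Set.mem_singleton_iff] at hxy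
      obtain ⟨hxy | hyx, hne⟩ := hxy
      · by_contra! hay
        obtain rfl : x = a := hxa.eq_of_not_lt fun hlt => hxy.2 hlt hay
        exact hne (by rw [hxy.unique_right hab])
      · exact hyx.lt.le.trans hxa
    exact hab.lt.not_ge (hreach.mem_of_forall_adj_mem (s := Set.Iic a) hclosed le_rfl)
  rw [isAcyclic_iff_forall_adj_isBridge]
  rintro a b (hab | hba)
  · exact hbridge a b hab
  · exact Sym2.eq_swap ▸ hbridge b a hba

section Quotient

variable {V : Type*} {G : SimpleGraph V}

theorem SimpleGraph.Reachable.quotGraphPart {P : Set (Set V)} (hP : Setoid.IsPartition P)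
    {u v : V} (huv : G.Reachable u v) {A B : Set V} (hA : A ∈ P) (hB : B ∈ P) (hu : u ∈ A)
    (hv : v ∈ B) : (quotGraphPart G P).Reachable ⟨A, hA⟩ ⟨B, hB⟩ := by
  obtain ⟨p⟩ := huv
  induction p generalizing A with
  | nil =>
    obtain rfl := Setoid.eq_of_mem_eqv_class hP.2 hA hu hB hv
    rfl
  | @cons u w v huw _ ih =>
    obtain ⟨C, ⟨hC, hw⟩, -⟩ := hP.2 w
    refine Reachable.trans ?_ (ih hC hw hv)
    by_cases hAC : A = C
    · subst hAC
      rfl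
    · exact Adj.reachable ⟨fun h => hAC (congrArg Subtype.val h), u, hu, w, hw, huw⟩

theorem SimpleGraph.Connected.quotGraphPart {P : Set (Set V)} (hG : G.Connected)
    (hP : Setoid.IsPartition P) : (quotGraphPart G P).Connected := by
  obtain ⟨v⟩ := hG.nonempty
  obtain ⟨A, ⟨hA, -⟩, -⟩ := hP.2 v
  have : Nonempty P := ⟨⟨A, hA⟩⟩
  refine ⟨fun ⟨A, hA⟩ ⟨B, hB⟩ => ?_⟩
  obtain ⟨a, ha⟩ := Setoid.nonempty_of_mem_partition hP hA
  obtain ⟨b, hb⟩ := Setoid.nonempty_of_mem_partition hP hB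
  exact (hG a b).quotGraphPart hP hA hB ha hb

theorem SimpleGraph.IsAcyclic.quotGraphPart_ker {W : Type*} {H : SimpleGraph W}
    (hH : H.IsAcyclic) (f : V → W) (hf : ∀ ⦃u v⦄, G.Adj u v → f u = f v ∨ H.Adj (f u) (f v)) :
    (quotGraphPart G (Setoid.ker f).classes).IsAcyclic := by
  choose rep hrep using fun A : (Setoid.ker f).classes => A.2
  have hmem : ∀ (A : (Setoid.ker f).classes) u, u ∈ (A : Set V) ↔ f u = f (rep A) := fun A u => by
    rw [hrep A]
    rfl
  have hinj : Function.Injective fun A => f (rep A) := fun A B (h : f (rep A) = f (rep B)) =>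
    Subtype.ext <| Set.ext fun u => by rw [hmem, hmem, h]
  refine hH.comap ⟨fun A => f (rep A), ?_⟩ hinj
  rintro A B ⟨hAB, u, hu, v, hv, huv⟩
  rw [hmem] at hu hv
  rw [← hu, ← hv]
  exact (hf huv).resolve_left fun h => hAB (hinj (hu.symm.trans (h.trans hv)))

end Quotient

section DistToSet

variable {V : Type*} {G : SimpleGraph V} {S : Set V} {u v : V}

theorem distToSet_le_dist (hu : u ∈ S) : distToSet G S v ≤ G.dist u v :=
  Nat.sInf_le ⟨u, hu, rfl⟩

theorem exists_dist_eq_distToSet (hS : S.Nonempty) (v : V) :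
    ∃ u ∈ S, G.dist u v = distToSet G S v :=
  Nat.sInf_mem (hS.image fun u => G.dist u v)

theorem distToSet_eq_zero_iff (hG : G.Connected) (hS : S.Nonempty) :
    distToSet G S v = 0 ↔ v ∈ S := by
  refine ⟨fun h => ?_, fun hv => Nat.eq_zero_of_le_zero ?_⟩
  · obtain ⟨u, hu, hdist⟩ := exists_dist_eq_distToSet hS v
    rwa [← hG.dist_eq_zero_iff.1 (hdist.trans h)]
  · exact (distToSet_le_dist hv).trans_eq dist_self

theorem distToSet_le_add_one_of_adj (hS : S.Nonempty) (h : G.Adj u v) :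
    distToSet G S v ≤ distToSet G S u + 1 := by
  obtain ⟨w, hw, hdist⟩ := exists_dist_eq_distToSet (G := G) hS u
  calc distToSet G S v ≤ G.dist w v := distToSet_le_dist hw
    _ ≤ G.dist w u + G.dist u v := h.reachable.dist_triangle_right w
    _ = distToSet G S u + 1 := by rw [hdist, dist_eq_one_iff_adj.2 h]

end DistToSet

theorem exists_block_tree_general {V : Type*} (G : SimpleGraph V)
    (hconn : G.Connected) (V₁ : Set V) (hne : V₁.Nonempty) :
    ∃ 𝒱 : Set (Set V), Setoid.IsPartition 𝒱 ∧ V₁ ∈ 𝒱 ∧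
      (∀ A ∈ 𝒱, A ≠ V₁ → ∃ k : ℕ, 1 ≤ k ∧ A ⊆ {v : V | distToSet G V₁ v = k}) ∧
      (quotGraphPart G 𝒱).IsTree := by
  have hroot : V₁ ∈ (Setoid.ker (distToSet G V₁)).classes := by
    have ⟨v₁, hv₁⟩ := hne
    refine ⟨v₁, Set.ext fun x => ?_⟩
    rw [Set.mem_ofPred_eq, Setoid.ker_def, (distToSet_eq_zero_iff hconn hne).2 hv₁,
      distToSet_eq_zero_iff hconn hne]
  refine ⟨(Setoid.ker (distToSet G V₁)).classes, Setoid.isPartition_classes _, hroot, ?_,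
    hconn.quotGraphPart (Setoid.isPartition_classes _), ?_⟩
  · rintro _ ⟨y, rfl⟩ hA
    refine ⟨distToSet G V₁ y, Nat.one_le_iff_ne_zero.2 fun hy => hA ?_, fun x hx => hx⟩
    ext x
    rw [Set.mem_ofPred_eq, Setoid.ker_def, hy, distToSet_eq_zero_iff hconn hne]
  · refine (hasse_isAcyclic ℕ).quotGraphPart_ker _ fun u v huv => ?_
    have hv := distToSet_le_add_one_of_adj hne huv
    have hu := distToSet_le_add_one_of_adj hne huv.symm
    rw [hasse_adj, Nat.covBy_iff_add_one_eq, Nat.covBy_iff_add_one_eq]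
    omega

/-- For every finite connected simple graph `G` and every nonempty
`V₁ ⊆ V`, there is a partition `𝒱` of `V` such that `V₁` is a block of `𝒱`, every
other block is contained in a single distance layer `{v | dist(v, V₁) = k}` for some
`k ≥ 1`, and the quotient graph of `G` by `𝒱` is a tree (a block-tree with root
cluster `V₁`). -/
theorem exists_block_tree {V : Type*} [Fintype V] (G : SimpleGraph V)
    (hconn : G.Connected) (V₁ : Set V) (hne : V₁.Nonempty) :
    ∃ 𝒱 : Set (Set V), Setoid.IsPartition 𝒱 ∧ V₁ ∈ 𝒱 ∧
      (∀ A ∈ 𝒱, A ≠ V₁ → ∃ k : ℕ, 1 ≤ k ∧ A ⊆ {v : V | distToSet G V₁ v = k}) ∧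
      (quotGraphPart G 𝒱).IsTree :=
  exists_block_tree_general G hconn V₁ hne
end

section
/- Let G = (V, E) be a finite simple graph, Ω_v a finite nonempty set for each v ∈ V, and p : (∏_{v∈V} Ω_v) → ℝ a function that factorizes over the cliques of G, i.e., p(x) = ∏_{C ∈ 𝒞} ψ_C(x_C) for a finite family 𝒞 of cliques of G and functions ψ_C depending only on x_C. Let 𝒱 be a partition of V whose quotient graph 𝒯 is a tree (a block-tree of G), let {i, j} be an edge of 𝒯, let 𝒜 be the clusters in the component of i in 𝒯 with the edge {i, j} removed and ℬ the clusters in the component of j. Then there exist functions f and g such that f depends only on the coordinates indexed by (∪_{A∈𝒜} A) ∪ j, g depends only on the coordinates indexed by (∪_{B∈ℬ} B) ∪ i, and p(x) = f(x) · g(x) for all x. -/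
/-!
The clusters met by a clique of `G` are pairwise equal or adjacent in the quotient graph `𝒯`,
so a clique meeting a cluster other than `i` and `j` stays inside the component of that
cluster in `𝒯` minus `{i, j}`. Since `𝒯` is connected, that component contains `i` or `j`.
Hence every clique lies on one of the two sides, and grouping the clique potentials by side
factorizes `p`.
-/

/-- The quotient graph of `G` by the partition of `V` into the fibers of a surjective
map `π : V → ι` (the clusters): distinct clusters `a`, `b` are adjacent iff some
vertex of cluster `a` is adjacent in `G` to some vertex of cluster `b`. -/
def quotGraph {V ι : Type*} (G : SimpleGraph V) (π : V → ι) : SimpleGraph ι where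
  Adj a b := a ≠ b ∧ ∃ u v : V, π u = a ∧ π v = b ∧ G.Adj u v
  symm := by
    constructor
    rintro a b ⟨hne, u, v, hu, hv, huv⟩
    exact ⟨hne.symm, v, u, hv, hu, huv.symm⟩
  loopless := by constructor; rintro a ⟨hne, -⟩; exact hne rfl

section Factorization

variable {V κ M : Type*} {Ω : V → Type*} [CommMonoid M]

lemma Finset.dependsOn_prod {ψ : κ → (∀ v, Ω v) → M} {A : Set V} {S : Finset κ}
    (h : ∀ c ∈ S, DependsOn (ψ c) A) : DependsOn (fun x ↦ ∏ c ∈ S, ψ c x) A :=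
  fun _ _ hxy ↦ Finset.prod_congr rfl fun c hc ↦ h c hc hxy

lemma exists_dependsOn_mul_eq_prod [Fintype κ] {ψ : κ → (∀ v, Ω v) → M} {A B : Set V}
    (hAB : ∀ c, DependsOn (ψ c) A ∨ DependsOn (ψ c) B) :
    ∃ f g : (∀ v, Ω v) → M, DependsOn f A ∧ DependsOn g B ∧ ∀ x, ∏ c, ψ c x = f x * g x := by
  classical
  refine ⟨fun x ↦ ∏ c with DependsOn (ψ c) A, ψ c x,
    fun x ↦ ∏ c with ¬DependsOn (ψ c) A, ψ c x, ?_, ?_, ?_⟩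
  · exact Finset.dependsOn_prod fun c hc ↦ (Finset.mem_filter.1 hc).2
  · exact Finset.dependsOn_prod fun c hc ↦ (hAB c).resolve_left (Finset.mem_filter.1 hc).2
  · exact fun x ↦ (Finset.prod_filter_mul_prod_filter_not _ _ _).symm

end Factorization

namespace SimpleGraph

variable {ι V : Type*} {T : SimpleGraph ι}

lemma Adj.reachable_deleteEdges_or {i j a b : ι} (hab : T.Adj a b)
    (ha : (T.deleteEdges {s(i, j)}).Reachable i a ∨ (T.deleteEdges {s(i, j)}).Reachable j a) :
    (T.deleteEdges {s(i, j)}).Reachable i b ∨ (T.deleteEdges {s(i, j)}).Reachable j b := by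
  by_cases he : s(a, b) = s(i, j)
  · rcases Sym2.eq_iff.1 he with ⟨rfl, rfl⟩ | ⟨rfl, rfl⟩
    · exact Or.inr .rfl
    · exact Or.inl .rfl
  · have hadj : (T.deleteEdges {s(i, j)}).Adj a b := deleteEdges_adj.2 ⟨hab, he⟩
    exact ha.imp (·.trans hadj.reachable) (·.trans hadj.reachable)

lemma Reachable.reachable_deleteEdges_or {i a : ι} (j : ι) (h : T.Reachable i a) :
    (T.deleteEdges {s(i, j)}).Reachable i a ∨ (T.deleteEdges {s(i, j)}).Reachable j a := by
  obtain ⟨w⟩ := h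
  induction w using Walk.concatRec with
  | Hnil => exact Or.inl .rfl
  | Hconcat _ hadj ih => exact hadj.reachable_deleteEdges_or ih

variable {G : SimpleGraph V} {π : V → ι}

lemma Adj.quotGraph_adj {u v : V} (h : G.Adj u v) (hne : π u ≠ π v) :
    (quotGraph G π).Adj (π u) (π v) :=
  ⟨hne, u, v, rfl, rfl, h⟩

lemma IsClique.reachable_quotGraph_deleteEdges {C : Set V} (hC : G.IsClique C) {u v : V}
    (hu : u ∈ C) (hv : v ∈ C) {s : Set (Sym2 ι)} (hs : s(π u, π v) ∉ s) :
    ((quotGraph G π).deleteEdges s).Reachable (π u) (π v) := by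
  by_cases hπ : π u = π v
  · rw [hπ]
  · have huv : u ≠ v := fun h ↦ hπ (congrArg π h)
    exact (deleteEdges_adj.2 ⟨(hC hu hv huv).quotGraph_adj hπ, hs⟩).reachable

lemma IsClique.subset_or_subset_of_connected_quotGraph (hT : (quotGraph G π).Connected)
    {C : Set V} (hC : G.IsClique C) (i j : ι) :
    C ⊆ {v | ((quotGraph G π).deleteEdges {s(i, j)}).Reachable i (π v) ∨ π v = j} ∨
      C ⊆ {v | ((quotGraph G π).deleteEdges {s(i, j)}).Reachable j (π v) ∨ π v = i} := by
  rw [or_iff_not_imp_left, Set.not_subset]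
  rintro ⟨u, hu, huA⟩
  obtain ⟨hnot_reach, huj⟩ := not_or.1 huA
  have hreach : ((quotGraph G π).deleteEdges {s(i, j)}).Reachable j (π u) :=
    ((hT i (π u)).reachable_deleteEdges_or j).resolve_left hnot_reach
  have hui : π u ≠ i := by rintro h; exact hnot_reach (h ▸ .rfl)
  intro v hv
  refine Or.inl (hreach.trans (hC.reachable_quotGraph_deleteEdges hu hv fun h ↦ ?_))
  rcases Sym2.mem_iff.1 ((Set.mem_singleton_iff.1 h) ▸ Sym2.mem_mk_left _ _) with h | h
  exacts [hui h, huj h]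

end SimpleGraph

theorem block_tree_edge_factorization_general {V ι : Type*}
    (Ω : V → Type*)
    (G : SimpleGraph V) (π : V → ι)
    (hT : (quotGraph G π).IsTree)
    (p : (∀ v : V, Ω v) → ℝ)
    (κ : Type*) [Fintype κ] (Cl : κ → Set V) (ψ : κ → (∀ v : V, Ω v) → ℝ)
    (hCl : ∀ c : κ, G.IsClique (Cl c))
    (hψ : ∀ (c : κ) (x y : ∀ v : V, Ω v), (∀ v ∈ Cl c, x v = y v) → ψ c x = ψ c y)
    (hp : ∀ x : ∀ v : V, Ω v, p x = ∏ c : κ, ψ c x)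
    (i j : ι) :
    ∃ f g : (∀ v : V, Ω v) → ℝ,
      (∀ x y : ∀ v : V, Ω v,
        (∀ v : V, (((quotGraph G π).deleteEdges {s(i, j)}).Reachable i (π v) ∨ π v = j) →
          x v = y v) → f x = f y) ∧
      (∀ x y : ∀ v : V, Ω v,
        (∀ v : V, (((quotGraph G π).deleteEdges {s(i, j)}).Reachable j (π v) ∨ π v = i) →
          x v = y v) → g x = g y) ∧
      ∀ x : ∀ v : V, Ω v, p x = f x * g x := by
  have hside : ∀ c, DependsOn (ψ c) _ ∨ DependsOn (ψ c) _ := fun c ↦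
    ((hCl c).subset_or_subset_of_connected_quotGraph hT.connected i j).imp
      (fun h ↦ DependsOn.mono h fun _ _ ↦ hψ c _ _)
      (fun h ↦ DependsOn.mono h fun _ _ ↦ hψ c _ _)
  obtain ⟨f, g, hf, hg, hfg⟩ := exists_dependsOn_mul_eq_prod hside
  exact ⟨f, g, fun _ _ ↦ @hf _ _, fun _ _ ↦ @hg _ _, fun x ↦ (hp x).trans (hfg x)⟩

/-- Let `G` be a finite simple graph, `Ω v` finite nonempty sets, and
`p : (∀ v, Ω v) → ℝ` a function factorizing over the cliques of `G`
(`p x = ∏ c, ψ c x`, each clique potential `ψ c` depending only on the coordinates in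
the clique `Cl c`).  Let the partition given by a surjective `π : V → ι` have quotient
graph `𝒯 = quotGraph G π` a tree (a block-tree of `G`), and let `{i, j}` be an edge of
`𝒯`.  With `𝒜` the clusters in the component of `i` in `𝒯` minus the edge `{i, j}` and
`ℬ` those in the component of `j`, there exist `f`, `g` such that `f` depends only on
the coordinates indexed by `(⋃ 𝒜) ∪ (cluster j)`, `g` depends only on those indexed by
`(⋃ ℬ) ∪ (cluster i)`, and `p x = f x * g x` for all `x`. -/
theorem block_tree_edge_factorization {V ι : Type*} [Fintype V]
    (Ω : V → Type*) [∀ v, Fintype (Ω v)] [∀ v, Nonempty (Ω v)]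
    (G : SimpleGraph V) (π : V → ι) (hπ : Function.Surjective π)
    (hT : (quotGraph G π).IsTree)
    (p : (∀ v : V, Ω v) → ℝ)
    (κ : Type*) [Fintype κ] (Cl : κ → Set V) (ψ : κ → (∀ v : V, Ω v) → ℝ)
    (hCl : ∀ c : κ, G.IsClique (Cl c))
    (hψ : ∀ (c : κ) (x y : ∀ v : V, Ω v), (∀ v ∈ Cl c, x v = y v) → ψ c x = ψ c y)
    (hp : ∀ x : ∀ v : V, Ω v, p x = ∏ c : κ, ψ c x)
    (i j : ι) (hij : (quotGraph G π).Adj i j) :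
    ∃ f g : (∀ v : V, Ω v) → ℝ,
      (∀ x y : ∀ v : V, Ω v,
        (∀ v : V, (((quotGraph G π).deleteEdges {s(i, j)}).Reachable i (π v) ∨ π v = j) →
          x v = y v) → f x = f y) ∧
      (∀ x y : ∀ v : V, Ω v,
        (∀ v : V, (((quotGraph G π).deleteEdges {s(i, j)}).Reachable j (π v) ∨ π v = i) →
          x v = y v) → g x = g y) ∧
      ∀ x : ∀ v : V, Ω v, p x = f x * g x :=
  block_tree_edge_factorization_general Ω G π hT p κ Cl ψ hCl hψ hp i j
end
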